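/- arXiv:2112.04784 — 3 statements merged into one kernel-verified Lean document; each statement's English description precedes it below -/
import Mathlib

section
/- Let M ≅ ℤ^n be a lattice, N its dual lattice, σ ⊆ N_ℝ a strongly convex rational polyhedral cone, and ρ an extremal ray of σ with ρ^⊥ its orthogonal complement in M_ℝ. Then the subgroup of M generated by σ^∨ ∩ ρ^⊥ ∩ M equals ρ^⊥ ∩ M. -/
/-!
Generators of `σ` on the ray `ρ = ℝ≥0 v` pair to zero with all of `ρ^⊥`. For a generator `s` off
`ρ`, Farkas' lemma for the cone spanned by `S` and `-v` gives a rational functional `u ≥ 0` on `σ`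
with `u v = 0` and `u s > 0`: the alternative, `s + y = μ v` with `y ∈ σ` and `μ ≥ 0`, would put
`s` on `ρ` by extremality. Clearing denominators and summing over the generators gives
`w ∈ σ^∨ ∩ ρ^⊥ ∩ M` that is positive on every generator off `ρ`. Any `m ∈ ρ^⊥ ∩ M` is then
`(m + k • w) - k • w` with both terms in `σ^∨ ∩ ρ^⊥ ∩ M` once `k` is large.
-/

open Finset Matrix

theorem sum_insert_update_smul {R M ι : Type*} [Semiring R] [AddCommMonoid M] [Module R M]
    [DecidableEq ι] {j : ι} {T : Finset ι} (hj : j ∉ T) (c : ι → R) (μ : R) (a : ι → M) :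
    ∑ i ∈ insert j T, Function.update c j μ i • a i = μ • a j + ∑ i ∈ T, c i • a i := by
  rw [sum_insert hj, Function.update_self]
  congr 1
  exact sum_congr rfl fun i hi => by rw [Function.update_of_ne (ne_of_mem_of_not_mem hi hj)]

section Farkas

variable {𝕜 V ι : Type*} [Field 𝕜] [AddCommGroup V] [Module 𝕜 V]

theorem Module.Dual.sub_div_smul_apply (f g : Module.Dual 𝕜 V) (b z : V) :
    (g - (g b / f b) • f) z = g (z - (f z / f b) • b) := by
  simp only [LinearMap.sub_apply, LinearMap.smul_apply, map_sub, map_smul, smul_eq_mul]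
  ring

theorem eq_smul_add_sum_of_sub_div_smul_eq {f : Module.Dual 𝕜 V} {b x : V} {T : Finset ι}
    {c : ι → 𝕜} {a : ι → V}
    (h : x - (f x / f b) • b = ∑ i ∈ T, c i • (a i - (f (a i) / f b) • b)) :
    x = ((f x - ∑ i ∈ T, c i * f (a i)) / f b) • b + ∑ i ∈ T, c i • a i := by
  simp only [smul_sub, smul_smul, sum_sub_distrib, ← sum_smul] at h
  rw [sub_div, sub_smul, sum_div]
  simp only [mul_div_assoc]
  linear_combination (norm := module) h

variable [LinearOrder 𝕜] [IsStrictOrderedRing 𝕜]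

theorem Module.Dual.exists_apply_neg {x : V} (hx : x ≠ 0) : ∃ f : Module.Dual 𝕜 V, f x < 0 := by
  obtain ⟨f, hf⟩ := Module.Projective.exists_dual_ne_zero 𝕜 hx
  rcases hf.lt_or_gt with hneg | hpos
  · exact ⟨f, hneg⟩
  · exact ⟨-f, by simpa using hpos⟩

theorem exists_nonneg_coeffs_or_exists_dual_separating [DecidableEq ι] (T : Finset ι)
    (a : ι → V) (x : V) :
    (∃ c : ι → 𝕜, (∀ i, 0 ≤ c i) ∧ x = ∑ i ∈ T, c i • a i) ∨
      ∃ f : Module.Dual 𝕜 V, (∀ i ∈ T, 0 ≤ f (a i)) ∧ f x < 0 := by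
  induction T using Finset.induction_on generalizing a x with
  | empty =>
    by_cases hx : x = 0
    · exact .inl ⟨0, fun _ => le_rfl, by simp [hx]⟩
    · obtain ⟨f, hf⟩ := Module.Dual.exists_apply_neg (𝕜 := 𝕜) hx
      exact .inr ⟨f, by simp, hf⟩
  | insert j T hj ih =>
    obtain ⟨c, hc, rfl⟩ | ⟨f, hfT, hfx⟩ := ih a x
    · refine .inl ⟨Function.update c j 0, (Function.forall_update_iff c fun _ y => 0 ≤ y).2
        ⟨le_rfl, fun i _ => hc i⟩, ?_⟩
      rw [sum_insert_update_smul hj, zero_smul, zero_add]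
    by_cases hfj : 0 ≤ f (a j)
    · exact .inr ⟨f, forall_mem_insert _ _ _ |>.2 ⟨hfj, hfT⟩, hfx⟩
    rw [not_le] at hfj
    set b := a j
    -- Project along `b` onto `ker f` and recurse on the smaller family.
    obtain ⟨c, hc, hcx⟩ | ⟨g, hgT, hgx⟩ :=
      ih (fun i => a i - (f (a i) / f b) • b) (x - (f x / f b) • b)
    · have hμ : 0 < (f x - ∑ i ∈ T, c i * f (a i)) / f b := by
        refine div_pos_of_neg_of_neg ?_ hfj
        linarith [sum_nonneg fun i hi => mul_nonneg (hc i) (hfT i hi)]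
      refine .inl ⟨Function.update c j _, (Function.forall_update_iff c fun _ y => 0 ≤ y).2
        ⟨hμ.le, fun i _ => hc i⟩, ?_⟩
      rw [sum_insert_update_smul hj]
      exact eq_smul_add_sum_of_sub_div_smul_eq hcx
    · refine .inr ⟨g - (g b / f b) • f, forall_mem_insert _ _ _ |>.2 ⟨?_, fun i hi => ?_⟩, ?_⟩
      · rw [Module.Dual.sub_div_smul_apply, div_self hfj.ne, one_smul, sub_self, map_zero]
      · rw [Module.Dual.sub_div_smul_apply]
        exact hgT i hi
      · rw [Module.Dual.sub_div_smul_apply]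
        exact hgx

theorem exists_dual_pos_of_forall_add_sum_ne_smul [DecidableEq ι] {S : Finset ι} {a : ι → V}
    {j k : ι} (hj : j ∈ S)
    (h : ∀ c : ι → 𝕜, (∀ i, 0 ≤ c i) → ∀ μ : 𝕜, 0 ≤ μ → a k + ∑ i ∈ S, c i • a i ≠ μ • a j) :
    ∃ f : Module.Dual 𝕜 V, (∀ i ∈ S, 0 ≤ f (a i)) ∧ f (a j) = 0 ∧ 0 < f (a k) := by
  -- Farkas for the cone generated by the `a i`, `i ∈ S`, together with `-a j`.
  obtain ⟨c, hc, hck⟩ | ⟨f, hfS, hfk⟩ :=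
    exists_nonneg_coeffs_or_exists_dual_separating (𝕜 := 𝕜) (insertNone S)
      (Option.elim · (-a j) a) (-a k)
  · refine absurd ?_ (h (c ∘ some) (fun i => hc _) (c none) (hc none))
    rw [sum_insertNone] at hck
    simp only [Option.elim_none, Option.elim_some, smul_neg, Function.comp_apply] at hck ⊢
    linear_combination (norm := module) -hck
  · have hfj := hfS none (mem_insertNone.2 (by simp))
    have hfS' : ∀ i ∈ S, 0 ≤ f (a i) := fun i hi => hfS (some i) (mem_insertNone.2 (by simpa))
    simp only [Option.elim_none, map_neg, neg_nonneg, neg_neg_iff_pos] at hfj hfk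
    exact ⟨f, hfS', le_antisymm hfj (hfS' j hj), hfk⟩

end Farkas

section Subgroup

variable {M ι : Type*} [AddCommGroup M] (K : AddSubgroup M) (φ : ι → M →+ ℤ) (S : Finset ι)

theorem exists_mem_forall_pos_or_vanishing
    (h : ∀ s ∈ S, (∀ m ∈ K, φ s m = 0) ∨ ∃ u ∈ K, (∀ t ∈ S, 0 ≤ φ t u) ∧ 0 < φ s u) :
    ∃ w ∈ K, ∀ s ∈ S, 0 < φ s w ∨ ∀ m ∈ K, φ s m = 0 := by
  have h' : ∀ s ∈ S, ∃ u ∈ K, (∀ t ∈ S, 0 ≤ φ t u) ∧ (0 < φ s u ∨ ∀ m ∈ K, φ s m = 0) := by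
    intro s hs
    rcases h s hs with hvan | ⟨u, huK, hu, hpos⟩
    · exact ⟨0, K.zero_mem, by simp, .inr hvan⟩
    · exact ⟨u, huK, hu, .inl hpos⟩
  choose! u huK hu hpos using h'
  have hsum : ∀ t ∈ S, ∀ s ∈ S, φ t (u s) ≤ φ t (∑ s ∈ S, u s) := fun t ht s hs => by
    rw [map_sum]
    exact single_le_sum (fun s hs => hu s hs t ht) hs
  exact ⟨∑ s ∈ S, u s, K.sum_mem huK,
    fun s hs => (hpos s hs).imp (fun h => h.trans_le (hsum s hs s hs)) id⟩

theorem AddSubgroup.closure_nonneg_eq_of_forall_pos_or_vanishing (w : M) (hwK : w ∈ K)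
    (hw : ∀ s ∈ S, 0 < φ s w ∨ ∀ m ∈ K, φ s m = 0) :
    AddSubgroup.closure {m | (∀ s ∈ S, 0 ≤ φ s m) ∧ m ∈ K} = K := by
  refine le_antisymm ((AddSubgroup.closure_le K).2 fun m hm => hm.2) fun m hm => ?_
  have hwK' : w ∈ {m | (∀ s ∈ S, 0 ≤ φ s m) ∧ m ∈ K} :=
    ⟨fun s hs => (hw s hs).elim le_of_lt fun h => (h w hwK).ge, hwK⟩
  -- `k` dominates every `|φ s m|`, so `m + k • w` lies in the cone.
  set k : ℤ := ∑ s ∈ S, |φ s m|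
  have hmkK : m + k • w ∈ K := K.add_mem hm (K.zsmul_mem hwK k)
  have hmk : m + k • w ∈ {m | (∀ s ∈ S, 0 ≤ φ s m) ∧ m ∈ K} := by
    refine ⟨fun s hs => ?_, hmkK⟩
    rcases hw s hs with hpos | hvan
    · have hk : |φ s m| ≤ k := single_le_sum (fun s _ => abs_nonneg (φ s m)) hs
      rw [map_add, map_zsmul, smul_eq_mul]
      nlinarith [neg_abs_le (φ s m), abs_nonneg (φ s m)]
    · exact (hvan _ hmkK).ge
  have : m = (m + k • w) - k • w := by abel
  rw [this]
  exact sub_mem (AddSubgroup.subset_closure hmk) (zsmul_mem (AddSubgroup.subset_closure hwK') k)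

end Subgroup

theorem exists_pos_mul_eq_intCast {ι : Type*} [Fintype ι] (x : ι → ℚ) :
    ∃ d : ℚ, 0 < d ∧ ∃ u : ι → ℤ, ∀ i, (u i : ℚ) = d * x i := by
  classical
  refine ⟨∏ j, ((x j).den : ℚ), prod_pos fun j _ => mod_cast (x j).pos,
    fun i => (x i).num * ∏ j ∈ univ.erase i, ((x j).den : ℤ), fun i => ?_⟩
  push_cast
  rw [← mul_prod_erase univ (fun j => ((x j).den : ℚ)) (mem_univ i), ← Rat.mul_den_eq_num]
  ring

section Lattice

variable {n : ℕ}

theorem dotProduct_eq_zero_of_cast_eq_smul {s v m : Fin n → ℤ} {τ : ℝ}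
    (h : (fun i => (s i : ℝ)) = τ • fun i => (v i : ℝ)) (hm : m ⬝ᵥ v = 0) : m ⬝ᵥ s = 0 := by
  have : ((m ⬝ᵥ s : ℤ) : ℝ) = τ * (m ⬝ᵥ v : ℤ) := by
    simp only [dotProduct, Int.cast_sum, Int.cast_mul, mul_sum]
    refine sum_congr rfl fun i _ => ?_
    rw [congrFun h i, Pi.smul_apply, smul_eq_mul]
    ring
  rw [hm, Int.cast_zero, mul_zero] at this
  exact_mod_cast this

theorem Module.Dual.exists_int_dotProduct_eq_pos_mul (f : Module.Dual ℚ (Fin n → ℝ)) :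
    ∃ u : Fin n → ℤ, ∃ d : ℚ, 0 < d ∧
      ∀ t : Fin n → ℤ, ((u ⬝ᵥ t : ℤ) : ℚ) = d * f (fun i => (t i : ℝ)) := by
  obtain ⟨d, hd, u, hu⟩ := exists_pos_mul_eq_intCast fun i => f (Pi.single i 1)
  refine ⟨u, d, hd, fun t => ?_⟩
  have ht : (fun i => (t i : ℝ)) = ∑ i, t i • Pi.single i (1 : ℝ) := by
    ext j
    simp [Finset.sum_apply, Pi.single_apply]
  rw [ht, map_sum]
  simp only [map_zsmul]
  simp only [dotProduct, Int.cast_sum, Int.cast_mul, hu, mul_sum, zsmul_eq_mul]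
  exact sum_congr rfl fun i _ => by ring

theorem exists_nonneg_smul_of_add_sum_eq_smul {S : Finset (Fin n → ℤ)} {v s : Fin n → ℤ}
    {σ : Set (Fin n → ℝ)}
    (hσ : σ = {x | ∃ c : (Fin n → ℤ) → ℝ, (∀ s, 0 ≤ c s) ∧
        x = ∑ s ∈ S, c s • (fun i => (s i : ℝ))})
    (hextremal : ∀ x ∈ σ, ∀ y ∈ σ,
        (∃ t : ℝ, 0 ≤ t ∧ x + y = t • fun i => (v i : ℝ)) →
        ∃ t : ℝ, 0 ≤ t ∧ x = t • fun i => (v i : ℝ))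
    (hs : s ∈ S) {c : (Fin n → ℤ) → ℚ} (hc : ∀ t, 0 ≤ c t) {μ : ℚ} (hμ : 0 ≤ μ)
    (h : (fun i => (s i : ℝ)) + ∑ t ∈ S, c t • (fun i => (t i : ℝ)) = μ • fun i => (v i : ℝ)) :
    ∃ τ : ℝ, 0 ≤ τ ∧ (fun i => (s i : ℝ)) = τ • fun i => (v i : ℝ) := by
  classical
  subst hσ
  simp only [← Rat.cast_smul_eq_qsmul ℝ] at h
  refine hextremal _ ⟨fun t => if t = s then 1 else 0, fun t => by positivity, ?_⟩
    _ ⟨fun t => (c t : ℝ), fun t => Rat.cast_nonneg.2 (hc t), rfl⟩ ⟨μ, mod_cast hμ, h⟩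
  simp only [ite_smul, one_smul, zero_smul, sum_ite_eq', if_pos hs]

theorem vanishes_on_perp_or_exists_separating {S : Finset (Fin n → ℤ)} {v s : Fin n → ℤ}
    (hvS : v ∈ S) {σ : Set (Fin n → ℝ)}
    (hσ : σ = {x | ∃ c : (Fin n → ℤ) → ℝ, (∀ s, 0 ≤ c s) ∧
        x = ∑ s ∈ S, c s • (fun i => (s i : ℝ))})
    (hextremal : ∀ x ∈ σ, ∀ y ∈ σ,
        (∃ t : ℝ, 0 ≤ t ∧ x + y = t • fun i => (v i : ℝ)) →
        ∃ t : ℝ, 0 ≤ t ∧ x = t • fun i => (v i : ℝ))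
    (hs : s ∈ S) :
    (∀ m : Fin n → ℤ, m ⬝ᵥ v = 0 → m ⬝ᵥ s = 0) ∨
      ∃ u : Fin n → ℤ, u ⬝ᵥ v = 0 ∧ (∀ t ∈ S, 0 ≤ u ⬝ᵥ t) ∧ 0 < u ⬝ᵥ s := by
  classical
  by_cases hray : ∃ τ : ℝ, 0 ≤ τ ∧ (fun i => (s i : ℝ)) = τ • fun i => (v i : ℝ)
  · obtain ⟨τ, -, hτ⟩ := hray
    exact .inl fun m hm => dotProduct_eq_zero_of_cast_eq_smul hτ hm
  -- Farkas over `ℚ` in `ℝⁿ`, seen as a `ℚ`-vector space: `f` is then rational on the lattice.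
  obtain ⟨f, hfS, hfv, hfs⟩ := exists_dual_pos_of_forall_add_sum_ne_smul (𝕜 := ℚ) (k := s)
    (a := fun t i => (t i : ℝ)) hvS fun c hc μ hμ h =>
      hray (exists_nonneg_smul_of_add_sum_eq_smul hσ hextremal hs hc hμ h)
  obtain ⟨u, d, hd, hu⟩ := f.exists_int_dotProduct_eq_pos_mul
  refine .inr ⟨u, ?_, fun t ht => ?_, ?_⟩
  · exact_mod_cast show ((u ⬝ᵥ v : ℤ) : ℚ) = 0 by rw [hu, hfv, mul_zero]
  · exact_mod_cast show (0 : ℚ) ≤ (u ⬝ᵥ t : ℤ) by rw [hu]; exact mul_nonneg hd.le (hfS t ht)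
  · exact_mod_cast show (0 : ℚ) < (u ⬝ᵥ s : ℤ) by rw [hu]; exact mul_pos hd hfs

end Lattice

theorem subgroup_generated_by_dual_cap_perp_general
    (n : ℕ) (S : Finset (Fin n → ℤ)) (v : Fin n → ℤ) (hvS : v ∈ S)
    (σ : Set (Fin n → ℝ))
    (hσ : σ = {x | ∃ c : (Fin n → ℤ) → ℝ, (∀ s, 0 ≤ c s) ∧
        x = ∑ s ∈ S, c s • (fun i => (s i : ℝ))})
    (hextremal : ∀ x ∈ σ, ∀ y ∈ σ,
        (∃ t : ℝ, 0 ≤ t ∧ x + y = t • fun i => (v i : ℝ)) →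
        ∃ t : ℝ, 0 ≤ t ∧ x = t • fun i => (v i : ℝ)) :
    (AddSubgroup.closure
        {m : Fin n → ℤ | (∀ s ∈ S, 0 ≤ ∑ i, m i * s i) ∧ ∑ i, m i * v i = 0}
      : Set (Fin n → ℤ))
      = {m : Fin n → ℤ | ∑ i, m i * v i = 0} := by
  let φ : (Fin n → ℤ) → (Fin n → ℤ) →+ ℤ := fun s =>
    AddMonoidHom.mk' (· ⬝ᵥ s) fun a b => add_dotProduct a b s
  obtain ⟨w, hwK, hw⟩ := exists_mem_forall_pos_or_vanishing (φ v).ker φ S fun s hs =>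
    vanishes_on_perp_or_exists_separating hvS hσ hextremal hs
  exact congrArg SetLike.coe
    (AddSubgroup.closure_nonneg_eq_of_forall_pos_or_vanishing _ φ S w hwK hw)

/-- For a strongly convex rational polyhedral cone `σ ⊆ N_ℝ` with generator set
`S ⊆ N = ℤ^n` and an extremal ray `ρ = ℝ≥0·v` with `v ∈ S`, the subgroup of `M = ℤ^n`
generated by `σ^∨ ∩ ρ^⊥ ∩ M` equals `ρ^⊥ ∩ M`. -/
theorem subgroup_generated_by_dual_cap_perp
    (n : ℕ) (S : Finset (Fin n → ℤ)) (v : Fin n → ℤ) (hvS : v ∈ S)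
    (σ : Set (Fin n → ℝ))
    (hσ : σ = {x | ∃ c : (Fin n → ℤ) → ℝ, (∀ s, 0 ≤ c s) ∧
        x = ∑ s ∈ S, c s • (fun i => (s i : ℝ))})
    (hstrong : ∀ x ∈ σ, -x ∈ σ → x = 0)
    (hextremal : ∀ x ∈ σ, ∀ y ∈ σ,
        (∃ t : ℝ, 0 ≤ t ∧ x + y = t • fun i => (v i : ℝ)) →
        ∃ t : ℝ, 0 ≤ t ∧ x = t • fun i => (v i : ℝ)) :
    (AddSubgroup.closure
        {m : Fin n → ℤ | (∀ s ∈ S, 0 ≤ ∑ i, m i * s i) ∧ ∑ i, m i * v i = 0}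
      : Set (Fin n → ℤ))
      = {m : Fin n → ℤ | ∑ i, m i * v i = 0} :=
  subgroup_generated_by_dual_cap_perp_general n S v hvS σ hσ hextremal
end

section
/- For every finite subgroup F of SL_n(ℤ) there exists a prime p such that F intersects the principal congruence subgroup Γ_p (the kernel of reduction mod p, SL_n(ℤ) → SL_n(ℤ/pℤ)) only in the identity matrix. -/
/-!
A nontrivial integer matrix `A ≠ 1` has a nonzero entry in `A - 1`, and that entry survives
reduction modulo every prime exceeding its absolute value. A finite subgroup has only finitely
many elements, so all of them survive modulo every sufficiently large prime, and there are
infinitely many primes.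
-/

open Filter

theorem Int.eventually_intCast_zmod_ne_zero {x : ℤ} (hx : x ≠ 0) :
    ∀ᶠ p : ℕ in atTop, (x : ZMod p) ≠ 0 := by
  filter_upwards [eventually_gt_atTop x.natAbs] with p hp hxp
  rw [ZMod.intCast_zmod_eq_zero_iff_dvd] at hxp
  exact hx (Int.eq_zero_of_dvd_of_natAbs_lt_natAbs hxp hp)

theorem Matrix.eventually_map_intCast_zmod_ne {m n : Type*} {A B : Matrix m n ℤ} (hAB : A ≠ B) :
    ∀ᶠ p : ℕ in atTop, A.map (Int.cast : ℤ → ZMod p) ≠ B.map Int.cast := by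
  obtain ⟨i, j, hij⟩ : ∃ i j, A i j ≠ B i j := by
    by_contra! h
    exact hAB (Matrix.ext h)
  filter_upwards [Int.eventually_intCast_zmod_ne_zero (sub_ne_zero.2 hij)] with p hp hmap
  apply hp
  rw [Int.cast_sub, sub_eq_zero]
  exact congrFun (congrFun hmap i) j

theorem Matrix.SpecialLinearGroup.eventually_map_intCast_zmod_ne_one {n : Type*} [Fintype n]
    [DecidableEq n] {A : Matrix.SpecialLinearGroup n ℤ} (hA : A ≠ 1) :
    ∀ᶠ p : ℕ in atTop, Matrix.SpecialLinearGroup.map (Int.castRingHom (ZMod p)) A ≠ 1 := by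
  have hA' : (A : Matrix n n ℤ) ≠ 1 := fun h => hA (Subtype.ext h)
  filter_upwards [Matrix.eventually_map_intCast_zmod_ne hA'] with p hp hmap
  apply hp
  rw [Matrix.map_one _ Int.cast_zero Int.cast_one]
  exact congrArg Subtype.val hmap

/-- For every finite subgroup `F` of `SL_n(ℤ)` there is a prime `p` such that `F`
meets the principal congruence subgroup `Γ_p = ker(SL_n(ℤ) → SL_n(ℤ/pℤ))` only in the
identity. -/
theorem finite_subgroup_meets_congruence_subgroup_trivially
    (n : ℕ) (F : Subgroup (Matrix.SpecialLinearGroup (Fin n) ℤ)) (hF : Finite F) :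
    ∃ p : ℕ, p.Prime ∧ ∀ A ∈ F,
      Matrix.SpecialLinearGroup.map (Int.castRingHom (ZMod p)) A = 1 → A = 1 := by
  have hF_trivial_mod_large_primes : ∀ᶠ p : ℕ in atTop, ∀ A ∈ F,
      Matrix.SpecialLinearGroup.map (Int.castRingHom (ZMod p)) A = 1 → A = 1 := by
    refine (Set.toFinite (F : Set (Matrix.SpecialLinearGroup (Fin n) ℤ))).eventually_all.2 fun A _ => ?_
    by_cases hA : A = 1
    · exact .of_forall fun _ _ => hA
    · exact (Matrix.SpecialLinearGroup.eventually_map_intCast_zmod_ne_one hA).mono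
        fun _ hp hmap => absurd hmap hp
  have h_primes : ∃ᶠ p : ℕ in atTop, p.Prime :=
    Nat.frequently_atTop_iff_infinite.2 Nat.infinite_setOfPred_prime
  exact (h_primes.and_eventually hF_trivial_mod_large_primes).exists
end

section
/- Let G be a group acting on a set X with a point x_0 whose orbit is all of X (transitive action restricted to an orbit W = G·x_0), let S be the stabilizer of x_0 and N_G(S) its normalizer. Then the map sending the right coset Sn ∈ S\N_G(S) to the transformation h·x_0 ↦ h n^{−1}·x_0 is a well-defined injective group homomorphism from S\N_G(S) onto the centralizer of (the image of) G in the symmetric group of W. -/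
/-! A permutation commuting with the image of `G` is `G`-equivariant, so on the transitive `G`-set
`X` it is determined by where it sends `x₀`, and it can send `x₀` to `y` exactly when `y` has the
same stabilizer `S` as `x₀`. Writing `y = n⁻¹ • x₀`, this says precisely that `n` normalizes `S`,
and the permutation is trivial exactly when `n ∈ S`. -/

theorem QuotientGroup.range_lift {G M : Type*} [Group G] [Group M] (N : Subgroup G) [N.Normal]
    (φ : G →* M) (HN : N ≤ φ.ker) : (QuotientGroup.lift N φ HN).range = φ.range := by
  conv_rhs => rw [← QuotientGroup.lift_comp_mk' N φ HN]
  rw [MonoidHom.range_comp, QuotientGroup.range_mk', ← MonoidHom.range_eq_map]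

namespace MulAction

variable {G X : Type*} [Group G] [MulAction G X]

theorem mem_normalizer_stabilizer_iff {x : X} {n : G} :
    n ∈ Subgroup.normalizer (stabilizer G x : Set G) ↔ stabilizer G (n • x) = stabilizer G x := by
  have hconj : ∀ h : G, h ∈ stabilizer G (n • x) ↔ n⁻¹ * h * n ∈ stabilizer G x := fun h => by
    simp only [mem_stabilizer_iff, mul_smul, inv_smul_eq_iff]
  rw [Subgroup.mem_normalizer_iff'', SetLike.ext_iff]
  simp only [hconj]
  exact forall_congr' fun _ => Iff.comm

theorem smul_eq_smul_of_stabilizer_le {x y : X} (hxy : stabilizer G x ≤ stabilizer G y) {g g' : G}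
    (h : g • x = g' • x) : g • y = g' • y := by
  rw [← inv_smul_eq_iff, smul_smul] at h ⊢
  exact hxy h

theorem mem_centralizer_range_toPermHom_iff {σ : Equiv.Perm X} :
    σ ∈ Subgroup.centralizer ((toPermHom G X).range : Set (Equiv.Perm X)) ↔
      ∀ (g : G) (x : X), σ (g • x) = g • σ x := by
  rw [Subgroup.mem_centralizer_iff]
  refine ⟨fun h g x => (DFunLike.congr_fun (h _ ⟨g, rfl⟩) x).symm, ?_⟩
  rintro h _ ⟨g, rfl⟩
  ext x
  exact (h g x).symm

theorem stabilizer_apply_eq_of_map_smul {σ : Equiv.Perm X}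
    (hσ : ∀ (g : G) (x : X), σ (g • x) = g • σ x) (x : X) :
    stabilizer G (σ x) = stabilizer G x := by
  ext g
  rw [mem_stabilizer_iff, mem_stabilizer_iff, ← hσ, σ.injective.eq_iff]

section Transitive

variable [IsPretransitive G X]

variable (G) in
/-- Built from a choice of `g` with `g • x = z`; the choice is irrelevant once
`stabilizer G x ≤ stabilizer G y`. -/
noncomputable def equivariantExtension (x y : X) : Function.End X :=
  fun z => (exists_smul_eq G x z).choose • y

theorem equivariantExtension_smul {x y : X} (hxy : stabilizer G x ≤ stabilizer G y) (g : G) :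
    equivariantExtension G x y (g • x) = g • y :=
  smul_eq_smul_of_stabilizer_le hxy (exists_smul_eq G x (g • x)).choose_spec

variable (x₀ : X)

theorem equivariantExtension_inv_smul_smul {n : G}
    (hn : n ∈ Subgroup.normalizer (stabilizer G x₀ : Set G)) (g : G) :
    equivariantExtension G x₀ (n⁻¹ • x₀) (g • x₀) = g • n⁻¹ • x₀ :=
  equivariantExtension_smul (mem_normalizer_stabilizer_iff.mp (inv_mem hn)).ge g

variable (G) in
noncomputable def normalizerToEnd :
    Subgroup.normalizer (stabilizer G x₀ : Set G) →* Function.End X where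
  toFun n := equivariantExtension G x₀ ((n : G)⁻¹ • x₀)
  map_one' := by
    funext x
    obtain ⟨g, rfl⟩ := exists_smul_eq G x₀ x
    exact (equivariantExtension_inv_smul_smul x₀ (one_mem _) g).trans
      (by rw [inv_one, one_smul]; rfl)
  map_mul' n m := by
    funext x
    obtain ⟨g, rfl⟩ := exists_smul_eq G x₀ x
    calc equivariantExtension G x₀ (((n * m : _) : G)⁻¹ • x₀) (g • x₀)
        = (g * (m : G)⁻¹) • (n : G)⁻¹ • x₀ := by
          rw [equivariantExtension_inv_smul_smul x₀ (n * m).2, Subgroup.coe_mul, mul_inv_rev,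
            mul_smul, mul_smul]
      _ = equivariantExtension G x₀ ((n : G)⁻¹ • x₀)
            (equivariantExtension G x₀ ((m : G)⁻¹ • x₀) (g • x₀)) := by
          rw [equivariantExtension_inv_smul_smul x₀ m.2, smul_smul g,
            equivariantExtension_inv_smul_smul x₀ n.2]

variable (G) in
noncomputable def normalizerToPerm :
    Subgroup.normalizer (stabilizer G x₀ : Set G) →* Equiv.Perm X :=
  (normalizerToEnd G x₀).toHomPerm

theorem normalizerToPerm_apply_smul (n : Subgroup.normalizer (stabilizer G x₀ : Set G)) (g : G) :
    normalizerToPerm G x₀ n (g • x₀) = g • (n : G)⁻¹ • x₀ :=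
  equivariantExtension_inv_smul_smul x₀ n.2 g

theorem ker_normalizerToPerm :
    (normalizerToPerm G x₀).ker =
      (stabilizer G x₀).subgroupOf (Subgroup.normalizer (stabilizer G x₀ : Set G)) := by
  ext n
  rw [MonoidHom.mem_ker, Subgroup.mem_subgroupOf, ← inv_mem_iff, mem_stabilizer_iff]
  constructor
  · intro h
    simpa [h] using (normalizerToPerm_apply_smul x₀ n 1).symm
  · intro h
    ext x
    obtain ⟨g, rfl⟩ := exists_smul_eq G x₀ x
    rw [normalizerToPerm_apply_smul, h]
    rfl

theorem range_normalizerToPerm :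
    (normalizerToPerm G x₀).range =
      Subgroup.centralizer ((toPermHom G X).range : Set (Equiv.Perm X)) := by
  ext σ
  rw [MonoidHom.mem_range, mem_centralizer_range_toPermHom_iff]
  constructor
  · rintro ⟨n, rfl⟩ g x
    obtain ⟨h, rfl⟩ := exists_smul_eq G x₀ x
    rw [smul_smul, normalizerToPerm_apply_smul, normalizerToPerm_apply_smul, mul_smul]
  · intro hσ
    obtain ⟨m, hm⟩ := exists_smul_eq G x₀ (σ x₀)
    have hm_mem : m ∈ Subgroup.normalizer (stabilizer G x₀ : Set G) :=
      mem_normalizer_stabilizer_iff.mpr (by rw [hm, stabilizer_apply_eq_of_map_smul hσ])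
    refine ⟨⟨m⁻¹, inv_mem hm_mem⟩, ?_⟩
    ext x
    obtain ⟨g, rfl⟩ := exists_smul_eq G x₀ x
    rw [normalizerToPerm_apply_smul, hσ, inv_inv, hm]

end Transitive

end MulAction

open MulAction in
/-- For a transitive action of `G` on `X` with base point `x₀`, stabilizer `S`
and normalizer `N_G(S)`, the assignment `Sn ↦ (h·x₀ ↦ h n⁻¹·x₀)` is a well-defined injective
group homomorphism from `S\N_G(S)` onto the centralizer of the image of `G` in `Sym(X)`. -/
theorem quotient_normalizer_iso_centralizer
    {G X : Type} [Group G] [MulAction G X] (x₀ : X)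
    (htrans : ∀ x : X, ∃ g : G, g • x₀ = x) :
    ∃ Φ : ((Subgroup.normalizer (MulAction.stabilizer G x₀ : Set G)) ⧸
        (MulAction.stabilizer G x₀).subgroupOf (Subgroup.normalizer (MulAction.stabilizer G x₀ : Set G)))
        →* Equiv.Perm X,
      Function.Injective Φ ∧
      (∀ (nn : (Subgroup.normalizer (MulAction.stabilizer G x₀ : Set G))) (g : G),
          Φ (QuotientGroup.mk nn) (g • x₀) = g • ((nn : G)⁻¹ • x₀)) ∧
      Φ.range = Subgroup.centralizer ((MulAction.toPermHom G X).range : Set (Equiv.Perm X)) := by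
  have := IsPretransitive.of_orbit htrans
  refine ⟨QuotientGroup.lift _ (normalizerToPerm G x₀) (ker_normalizerToPerm x₀).ge,
    (QuotientGroup.injective_lift_iff _ _ _).mpr (ker_normalizerToPerm x₀).symm,
    normalizerToPerm_apply_smul x₀, ?_⟩
  rw [QuotientGroup.range_lift, range_normalizerToPerm]
end
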